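/- Let s(n) denote the number of explicit substitutions of size n in the λυ-calculus under the natural size notion. Then s(0)=0 and for n ≥ 1, s(n) equals the partial sum of Catalan numbers: s(n) = Σ_{k=0}^{n-1} C(k), where C(k) is the k-th Catalan number. -/

import Mathlib

/-!
Writing `t n` and `s n` for the numbers of terms and substitutions of size `n`, a substitution
of size `n + 1` is `a/`, `⇑(σ)` or (for `n = 0`) `↑`, so `s (n + 1) = t n + s n + [n = 0]`;
a term of size `n + 1` is the index `n` or a term followed by a substitution, so
`t (n + 1) = 1 + ∑_{i + j = n + 1} t i * s j`. Counting in `ℕ∞` removes all finiteness side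
conditions. These recurrences are solved by `t n = C n` for `n ≥ 1` and `s n = ∑_{k < n} C k`:
the inductive step is the identity `C (n + 1) = 1 + ∑_{i + j = n} C (i + 1) * ∑_{k < j} C k`,
whose right-hand side telescopes by Segner's recurrence.
-/

open Finset Filter

mutual
inductive Tm : Type
  | idx : Nat → Tm
  | lam : Tm → Tm
  | app : Tm → Tm → Tm
  | clos : Tm → Subst → Tm
inductive Subst : Type
  | slash : Tm → Subst
  | lift : Subst → Subst
  | shift : Subst
end

mutual
/-- Natural size of a λυ-term: every constructor weighs 1; index n has size n+1. -/
def Tm.size : Tm → Nat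
  | .idx n => n + 1
  | .lam a => Tm.size a + 1
  | .app a b => Tm.size a + Tm.size b + 1
  | .clos a s => Tm.size a + Subst.size s + 1
/-- Natural size of an explicit substitution. -/
def Subst.size : Subst → Nat
  | .slash a => Tm.size a + 1
  | .lift s => Subst.size s + 1
  | .shift => 1
end

/-- Number of λυ-terms of size `n`. -/
noncomputable def tcount (n : ℕ) : ℕ := Nat.card {a : Tm // Tm.size a = n}

/-- Number of explicit substitutions of size `n`. -/
noncomputable def scount (n : ℕ) : ℕ := Nat.card {s : Subst // Subst.size s = n}

theorem ENat.card_sigma {ι : Type*} {β : ι → Type*} [Fintype ι] :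
    ENat.card (Σ i, β i) = ∑ i, ENat.card (β i) := by
  by_cases h : ∀ i, Finite (β i)
  · simp [ENat.card_eq_coe_natCard, Nat.card_sigma]
  · obtain ⟨i, hi⟩ := not_forall.1 h
    have : Infinite (β i) := not_finite_iff_infinite.1 hi
    have : Infinite (Σ i, β i) := Infinite.of_injective (Sigma.mk i) sigma_mk_injective
    rw [ENat.card_eq_top_of_infinite]
    exact (WithTop.sum_eq_top.2 ⟨i, mem_univ i, ENat.card_eq_top_of_infinite⟩).symm

theorem sum_antidiagonal_mul_sum_range {R : Type*} [NonUnitalNonAssocSemiring R] (f g : ℕ → R)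
    (n : ℕ) :
    ∑ ij ∈ antidiagonal n, f ij.1 * ∑ k ∈ range ij.2, g k =
      ∑ m ∈ range n, ∑ ij ∈ antidiagonal m, f ij.1 * g ij.2 := by
  induction n with
  | zero => simp
  | succ n ih =>
    rw [Finset.Nat.sum_antidiagonal_succ', sum_range_succ, ← ih]
    simp only [sum_range_zero, mul_zero, zero_add, sum_range_succ, mul_add, sum_add_distrib]

theorem catalan_succ_eq_one_add_sum (n : ℕ) :
    catalan (n + 1) =
      1 + ∑ ij ∈ antidiagonal n, catalan (ij.1 + 1) * ∑ k ∈ range ij.2, catalan k := by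
  rw [sum_antidiagonal_mul_sum_range (fun i => catalan (i + 1))]
  induction n with
  | zero => simp [catalan_one]
  | succ n ih =>
    rw [sum_range_succ, ← add_assoc, ← ih, catalan_succ' (n + 1),
      Finset.Nat.sum_antidiagonal_succ, catalan_zero, one_mul]

section AddFibre

variable {α β : Type*} (f : α → ℕ) (g : β → ℕ)

def addFibreEquiv (n : ℕ) :
    {p : α × β // f p.1 + g p.2 = n} ≃
      Σ ij : antidiagonal n, {a // f a = ij.1.1} × {b // g b = ij.1.2} where
  toFun p := ⟨⟨(f p.1.1, g p.1.2), mem_antidiagonal.2 p.2⟩, ⟨p.1.1, rfl⟩, ⟨p.1.2, rfl⟩⟩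
  invFun x := ⟨(x.2.1, x.2.2), by rw [x.2.1.2, x.2.2.2]; exact mem_antidiagonal.1 x.1.2⟩
  left_inv _ := rfl
  right_inv := by
    rintro ⟨⟨⟨i, j⟩, h⟩, ⟨a, ha⟩, ⟨b, hb⟩⟩
    dsimp only at ha hb
    subst ha hb
    rfl

theorem enatCard_addFibre (n : ℕ) :
    ENat.card {p : α × β // f p.1 + g p.2 = n} =
      ∑ ij ∈ antidiagonal n, ENat.card {a // f a = ij.1} * ENat.card {b // g b = ij.2} := by
  rw [ENat.card_congr (addFibreEquiv f g n), ENat.card_sigma, ← sum_coe_sort (antidiagonal n)]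
  simp only [ENat.card_prod]

end AddFibre

theorem Tm.one_le_size (a : Tm) : 1 ≤ a.size := by
  cases a <;> simp [Tm.size]

theorem Subst.one_le_size (s : Subst) : 1 ≤ s.size := by
  cases s <;> simp [Subst.size]

def Subst.sizeSuccEquiv (n : ℕ) :
    {s : Subst // s.size = n + 1} ≃
      ({a : Tm // a.size = n} ⊕ {s : Subst // s.size = n}) ⊕ PLift (n = 0) where
  toFun
    | ⟨.slash a, h⟩ => .inl (.inl ⟨a, by simpa [Subst.size] using h⟩)
    | ⟨.lift s, h⟩ => .inl (.inr ⟨s, by simpa [Subst.size] using h⟩)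
    | ⟨.shift, h⟩ => .inr ⟨by simp [Subst.size] at h; omega⟩
  invFun
    | .inl (.inl a) => ⟨.slash a, by simp [Subst.size, a.2]⟩
    | .inl (.inr s) => ⟨.lift s, by simp [Subst.size, s.2]⟩
    | .inr h => ⟨.shift, by simp [Subst.size, h.down]⟩
  left_inv := by rintro ⟨_ | _ | _, _⟩ <;> rfl
  right_inv := by rintro ((_ | _) | _) <;> rfl

/-- `λ a`, `a b` and `a[s]` correspond to `a` paired with `↑`, `b/` and `⇑(s)` respectively. -/
def Tm.sizeSuccEquiv (n : ℕ) :
    {a : Tm // a.size = n + 1} ≃ Unit ⊕ {p : Tm × Subst // p.1.size + p.2.size = n + 1} where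
  toFun
    | ⟨.idx _, _⟩ => .inl ()
    | ⟨.lam a, h⟩ => .inr ⟨(a, .shift), by simpa [Tm.size, Subst.size] using h⟩
    | ⟨.app a b, h⟩ => .inr ⟨(a, .slash b), by simp [Tm.size, Subst.size] at h ⊢; omega⟩
    | ⟨.clos a s, h⟩ => .inr ⟨(a, .lift s), by simp [Tm.size, Subst.size] at h ⊢; omega⟩
  invFun
    | .inl () => ⟨.idx n, rfl⟩
    | .inr ⟨(a, .shift), h⟩ => ⟨.lam a, by simpa [Tm.size, Subst.size] using h⟩
    | .inr ⟨(a, .slash b), h⟩ => ⟨.app a b, by simp [Tm.size, Subst.size] at h ⊢; omega⟩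
    | .inr ⟨(a, .lift s), h⟩ => ⟨.clos a s, by simp [Tm.size, Subst.size] at h ⊢; omega⟩
  left_inv := by
    rintro ⟨_ | _ | _ | _, h⟩
    · simp only [Tm.size, Nat.add_right_cancel_iff] at h
      subst h
      rfl
    all_goals rfl
  right_inv := by rintro (_ | ⟨⟨_, _ | _ | _⟩, _⟩) <;> rfl

noncomputable def etcount (n : ℕ) : ℕ∞ := ENat.card {a : Tm // a.size = n}

noncomputable def escount (n : ℕ) : ℕ∞ := ENat.card {s : Subst // s.size = n}

theorem etcount_zero : etcount 0 = 0 := by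
  rw [etcount, ENat.card_eq_zero_iff_empty]
  exact ⟨fun a => by have := a.1.one_le_size; omega⟩

theorem escount_zero : escount 0 = 0 := by
  rw [escount, ENat.card_eq_zero_iff_empty]
  exact ⟨fun s => by have := s.1.one_le_size; omega⟩

theorem escount_succ (n : ℕ) :
    escount (n + 1) = etcount n + escount n + if n = 0 then 1 else 0 := by
  rw [escount, ENat.card_congr (Subst.sizeSuccEquiv n), ENat.card_sum, ENat.card_sum]
  split_ifs with h <;> simp [h, etcount, escount]

theorem etcount_succ (n : ℕ) :
    etcount (n + 1) = 1 + ∑ ij ∈ antidiagonal (n + 1), etcount ij.1 * escount ij.2 := by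
  rw [etcount, ENat.card_congr (Tm.sizeSuccEquiv n), ENat.card_sum,
    enatCard_addFibre Tm.size Subst.size, ENat.card_eq_coe_fintype_card, Fintype.card_unit,
    Nat.cast_one]
  rfl

theorem etcount_escount_succ (n : ℕ) :
    etcount (n + 1) = catalan (n + 1) ∧ escount (n + 1) = ↑(∑ k ∈ range (n + 1), catalan k) := by
  induction n using Nat.strong_induction_on with
  | _ n ih =>
  constructor
  · rw [etcount_succ, Finset.Nat.sum_antidiagonal_succ, etcount_zero, zero_mul, zero_add,
      catalan_succ_eq_one_add_sum]
    push_cast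
    congr 1
    refine sum_congr rfl fun ⟨i, j⟩ hij => ?_
    rw [HasAntidiagonal.mem_antidiagonal] at hij
    cases j with
    | zero => simp [escount_zero]
    | succ j => rw [(ih i (by omega)).1, (ih j (by omega)).2]; push_cast; rfl
  · rw [escount_succ]
    cases n with
    | zero => simp [etcount_zero, escount_zero]
    | succ m =>
      rw [(ih m (by omega)).1, (ih m (by omega)).2, sum_range_succ _ (m + 1)]
      push_cast
      simp [add_comm]

theorem scount_eq_toNat_escount (n : ℕ) : scount n = (escount n).toNat := rfl

theorem scount_eq_sum_catalan (n : ℕ) : scount n = ∑ k ∈ range n, catalan k := by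
  rw [scount_eq_toNat_escount]
  cases n with
  | zero => rw [escount_zero, ENat.toNat_zero, sum_range_zero]
  | succ n => rw [(etcount_escount_succ n).2, ENat.toNat_natCast]

/-- s(0)=0 and for n ≥ 1, s(n) = Σ_{k=0}^{n-1} C(k). -/
theorem stmt1 :
    scount 0 = 0 ∧
      ∀ n : ℕ, 1 ≤ n → scount n = ∑ k ∈ Finset.range n, (Nat.choose (2 * k) k) / (k + 1) := by
  refine ⟨scount_eq_sum_catalan 0, fun n _ => ?_⟩
  simp only [scount_eq_sum_catalan, catalan_eq_centralBinom_div, Nat.centralBinom]
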